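/- Characteristic function factorization for coherent work processes: if V(|ψ⟩_S⊗|0⟩_A) = |φ⟩_S⊗|ω⟩_A with V unitary and [V, H_S⊗1+1⊗H_A]=0, and |0⟩_A has H_A-eigenvalue 0, then for all t ∈ ℝ, ⟨ψ|e^{itH_S}|ψ⟩ = ⟨φ|e^{itH_S}|φ⟩·⟨ω|e^{itH_A}|ω⟩; hence the energy distribution of ψ is the convolution of the energy distributions of φ and ω, and the distribution of ω is uniquely determined by those of ψ and φ. -/

import Mathlib

open scoped Matrix BigOperators

/-- Matrix exponential as a power series. -/
noncomputable def mexp {ι : Type*} [Fintype ι] [DecidableEq ι] (M : Matrix ι ι ℂ) :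
    Matrix ι ι ℂ :=
  ∑' k : ℕ, ((k.factorial : ℂ)⁻¹) • M ^ k

/-- Quadratic form `⟨v, M v⟩`. -/
noncomputable def qform {ι : Type*} [Fintype ι] (M : Matrix ι ι ℂ) (v : ι → ℂ) : ℂ :=
  star v ⬝ᵥ M.mulVec v

/-- Characteristic function `t ↦ ⟨v| e^{itH} |v⟩` of the energy measurement of `v`. -/
noncomputable def charFn {ι : Type*} [Fintype ι] [DecidableEq ι]
    (H : Matrix ι ι ℂ) (v : ι → ℂ) (t : ℝ) : ℂ :=
  qform (mexp (((t : ℂ) * Complex.I) • H)) v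

/-!
Since `V` commutes with `H_tot = H_S ⊗ 1 + 1 ⊗ H_A`, it commutes with `e^{itH_tot}`, so the
characteristic function of `ψ ⊗ |0⟩` with respect to `H_tot` is that of `V(ψ ⊗ |0⟩) = φ ⊗ ω`.
The two summands of `H_tot` commute, hence `e^{itH_tot} = e^{itH_S} ⊗ e^{itH_A}` and the
characteristic function of a product state factors; for `ψ ⊗ |0⟩` the second factor is `1`
because `H_A|0⟩ = 0`.

For uniqueness, `t ↦ ⟨φ|e^{itH_S}|φ⟩` equals `1` at `t = 0`, so it can be cancelled near `0`;
characteristic functions of finite-dimensional states are real-analytic, and the identity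
theorem extends the equality to all of `ℝ`.
-/

open scoped Kronecker Matrix.Norms.Operator
open NormedSpace

section
variable {ι κ : Type*} [Fintype ι] [DecidableEq ι] [Fintype κ] [DecidableEq κ]

lemma mexp_eq_exp (M : Matrix ι ι ℂ) : mexp M = exp M := by
  rw [exp_eq_tsum ℂ]; rfl

lemma exp_kronecker_one_add_one_kronecker (A : Matrix ι ι ℂ) (B : Matrix κ κ ℂ) :
    exp (A ⊗ₖ (1 : Matrix κ κ ℂ) + (1 : Matrix ι ι ℂ) ⊗ₖ B) = exp A ⊗ₖ exp B := by
  let kron := (Matrix.kroneckerAlgEquiv ι κ ℂ).toAlgHom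
  let kronLeft := kron.comp Algebra.TensorProduct.includeLeft
  let kronRight := kron.comp Algebra.TensorProduct.includeRight
  have hleft : exp (A ⊗ₖ (1 : Matrix κ κ ℂ)) = exp A ⊗ₖ (1 : Matrix κ κ ℂ) :=
    (map_exp kronLeft kronLeft.toLinearMap.continuous_of_finiteDimensional A).symm
  have hright : exp ((1 : Matrix ι ι ℂ) ⊗ₖ B) = (1 : Matrix ι ι ℂ) ⊗ₖ exp B :=
    (map_exp kronRight kronRight.toLinearMap.continuous_of_finiteDimensional B).symm
  have hcomm : Commute (A ⊗ₖ (1 : Matrix κ κ ℂ)) ((1 : Matrix ι ι ℂ) ⊗ₖ B) := by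
    simp only [Commute, SemiconjBy, ← Matrix.mul_kronecker_mul, one_mul, mul_one]
  rw [Matrix.exp_add_of_commute _ _ hcomm, hleft, hright, ← Matrix.mul_kronecker_mul, one_mul,
    mul_one]

lemma exp_mulVec_of_mulVec_eq_zero {A : Matrix ι ι ℂ} {v : ι → ℂ} (hA : A *ᵥ v = 0) :
    exp A *ᵥ v = v := by
  have hexp := (exp_series_hasSum_exp' (𝕂 := ℂ) A).map (Matrix.mulVec.addMonoidHomLeft v)
    (Continuous.matrix_mulVec continuous_id continuous_const)
  refine hexp.unique (hasSum_single 0 fun n hn => ?_) |>.trans ?_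
  · obtain ⟨n, rfl⟩ := Nat.exists_eq_succ_of_ne_zero hn
    simp [Matrix.mulVec.addMonoidHomLeft, Matrix.smul_mulVec, pow_succ, ← Matrix.mulVec_mulVec, hA]
  · simp [Matrix.mulVec.addMonoidHomLeft]

lemma qform_one (v : ι → ℂ) : qform (1 : Matrix ι ι ℂ) v = ((∑ i, ‖v i‖ ^ 2 : ℝ) : ℂ) := by
  simp [qform, dotProduct, Complex.mul_conj', mul_comm]

omit [DecidableEq ι] [DecidableEq κ] in
lemma kronecker_mulVec_prod (M : Matrix ι ι ℂ) (N : Matrix κ κ ℂ) (u : ι → ℂ) (v : κ → ℂ) :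
    (M ⊗ₖ N) *ᵥ (fun x => u x.1 * v x.2) = fun x => (M *ᵥ u) x.1 * (N *ᵥ v) x.2 := by
  ext x
  simp only [Matrix.mulVec, dotProduct, Fintype.sum_prod_type, Finset.sum_mul_sum]
  exact Finset.sum_congr rfl fun i _ => Finset.sum_congr rfl fun j _ => by
    rw [Matrix.kroneckerMap_apply]; ring

omit [DecidableEq ι] [DecidableEq κ] in
lemma qform_kronecker (M : Matrix ι ι ℂ) (N : Matrix κ κ ℂ) (u : ι → ℂ) (v : κ → ℂ) :
    qform (M ⊗ₖ N) (fun x => u x.1 * v x.2) = qform M u * qform N v := by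
  simp only [qform, kronecker_mulVec_prod, dotProduct, Fintype.sum_prod_type, Finset.sum_mul_sum,
    Pi.star_apply, star_mul']
  exact Finset.sum_congr rfl fun i _ => Finset.sum_congr rfl fun j _ => by ring

omit [DecidableEq ι] in
lemma qform_mulVec (M W : Matrix ι ι ℂ) (w : ι → ℂ) :
    qform M (W *ᵥ w) = qform (Wᴴ * M * W) w := by
  simp only [qform, Matrix.star_mulVec, Matrix.dotProduct_mulVec, Matrix.vecMul_vecMul,
    Matrix.mulVec_mulVec, Matrix.mul_assoc]

lemma analyticAt_charFn (H : Matrix ι ι ℂ) (v : ι → ℂ) (t : ℝ) :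
    AnalyticAt ℝ (charFn H v) t := by
  let qformL : Matrix ι ι ℂ →L[ℝ] ℂ := LinearMap.toContinuousLinearMap
    { toFun := (qform · v)
      map_add' := by simp [qform, Matrix.add_mulVec]
      map_smul' := by simp [qform, Matrix.smul_mulVec] }
  have hlin : AnalyticAt ℝ (fun s : ℝ => s • (Complex.I • H)) t :=
    analyticAt_id.smul analyticAt_const
  convert qformL.analyticAt _ |>.comp ((exp_analytic _).comp hlin) using 1
  funext s
  simp only [charFn, mexp_eq_exp, mul_smul, Complex.coe_smul, Function.comp_apply]
  rfl

lemma charFn_zero (H : Matrix ι ι ℂ) {v : ι → ℂ} (hv : ∑ i, ‖v i‖ ^ 2 = 1) :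
    charFn H v 0 = 1 := by
  simp [charFn, mexp_eq_exp, qform_one, hv]

lemma charFn_eq_mul_of_commute_kronecker_sum {HS : Matrix ι ι ℂ} {HA : Matrix κ κ ℂ}
    {V : Matrix (ι × κ) (ι × κ) ℂ} (hV : Vᴴ * V = 1)
    (hcomm : Commute V (HS ⊗ₖ (1 : Matrix κ κ ℂ) + (1 : Matrix ι ι ℂ) ⊗ₖ HA))
    {ψ φ : ι → ℂ} {e0 ω : κ → ℂ} (he0n : ∑ j, ‖e0 j‖ ^ 2 = 1) (he0 : HA *ᵥ e0 = 0)
    (hact : V *ᵥ (fun x => ψ x.1 * e0 x.2) = fun x => φ x.1 * ω x.2) (t : ℝ) :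
    charFn HS ψ t = charFn HS φ t * charFn HA ω t := by
  set c : ℂ := t * Complex.I
  have hexp : exp (c • (HS ⊗ₖ (1 : Matrix κ κ ℂ) + (1 : Matrix ι ι ℂ) ⊗ₖ HA))
      = exp (c • HS) ⊗ₖ exp (c • HA) := by
    rw [smul_add, ← Matrix.smul_kronecker, ← Matrix.kronecker_smul,
      exp_kronecker_one_add_one_kronecker]
  have hinv : Vᴴ * exp (c • (HS ⊗ₖ (1 : Matrix κ κ ℂ) + (1 : Matrix ι ι ℂ) ⊗ₖ HA)) * V
      = exp (c • (HS ⊗ₖ (1 : Matrix κ κ ℂ) + (1 : Matrix ι ι ℂ) ⊗ₖ HA)) := by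
    rw [Matrix.mul_assoc, ← (hcomm.smul_right c).exp_right.eq, ← Matrix.mul_assoc, hV,
      Matrix.one_mul]
  have hvacuum : qform (exp (c • HA)) e0 = 1 := by
    have hfix : exp (c • HA) *ᵥ e0 = e0 :=
      exp_mulVec_of_mulVec_eq_zero (by rw [Matrix.smul_mulVec, he0, smul_zero])
    calc qform (exp (c • HA)) e0 = qform 1 e0 := by simp only [qform, Matrix.one_mulVec, hfix]
      _ = 1 := by rw [qform_one, he0n, Complex.ofReal_one]
  calc charFn HS ψ t = qform (exp (c • HS)) ψ * qform (exp (c • HA)) e0 := by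
        rw [hvacuum, mul_one, charFn, mexp_eq_exp]
    _ = qform (exp (c • HS)) φ * qform (exp (c • HA)) ω := by
        rw [← qform_kronecker, ← hexp, ← hinv, ← qform_mulVec, hact, hexp, qform_kronecker]
    _ = charFn HS φ t * charFn HA ω t := by
        simp only [charFn, mexp_eq_exp, c]

end

lemma eq_of_mul_eq_mul_left_of_analyticOnNhd {F G H : ℝ → ℂ}
    (hG : AnalyticOnNhd ℝ G Set.univ) (hH : AnalyticOnNhd ℝ H Set.univ)
    (hF : ContinuousAt F 0) (hF0 : F 0 ≠ 0) (h : ∀ t, F t * G t = F t * H t) : G = H :=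
  hG.eq_of_eventuallyEq hH <| by
    filter_upwards [hF.eventually_ne hF0] with t ht using mul_left_cancel₀ ht (h t)

theorem stmt19_general {m a : ℕ} (HS : Matrix (Fin m) (Fin m) ℂ) (HA : Matrix (Fin a) (Fin a) ℂ)
    (Htot V : Matrix (Fin m × Fin a) (Fin m × Fin a) ℂ)
    (hHtot : Htot = Matrix.of fun x y =>
      HS x.1 y.1 * (if x.2 = y.2 then 1 else 0) + (if x.1 = y.1 then 1 else 0) * HA x.2 y.2)
    (hV₂ : Vᴴ * V = 1)
    (hcomm : V * Htot = Htot * V)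
    (ψ φ : Fin m → ℂ) (e0 ω : Fin a → ℂ)
    (hφ : ∑ i, ‖φ i‖ ^ 2 = 1)
    (he0n : ∑ j, ‖e0 j‖ ^ 2 = 1)
    (he0 : HA.mulVec e0 = 0)
    (hact : V.mulVec (fun x => ψ x.1 * e0 x.2) = fun x => φ x.1 * ω x.2) :
    (∀ t : ℝ, charFn HS ψ t = charFn HS φ t * charFn HA ω t) ∧
    (∀ (V' : Matrix (Fin m × Fin a) (Fin m × Fin a) ℂ) (ω' : Fin a → ℂ),
      V' * V'ᴴ = 1 → V'ᴴ * V' = 1 → V' * Htot = Htot * V' →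
      (∑ j, ‖ω' j‖ ^ 2 = 1) →
      V'.mulVec (fun x => ψ x.1 * e0 x.2) = (fun x => φ x.1 * ω' x.2) →
      ∀ t : ℝ, charFn HA ω' t = charFn HA ω t) := by
  obtain rfl : Htot = HS ⊗ₖ 1 + 1 ⊗ₖ HA := by
    rw [hHtot]; ext x y; simp [Matrix.kroneckerMap_apply, Matrix.one_apply]
  have factor := charFn_eq_mul_of_commute_kronecker_sum hV₂ hcomm he0n he0 hact
  refine ⟨factor, fun V' ω' _ hV'₂ hcomm' _ hact' => congrFun ?_⟩
  have factor' := charFn_eq_mul_of_commute_kronecker_sum hV'₂ hcomm' he0n he0 hact'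
  refine eq_of_mul_eq_mul_left_of_analyticOnNhd (fun t _ => analyticAt_charFn HA ω' t)
    (fun t _ => analyticAt_charFn HA ω t) (analyticAt_charFn HS φ 0).continuousAt
    (by rw [charFn_zero HS hφ]; exact one_ne_zero) fun t => ?_
  rw [← factor, ← factor']

/-- Characteristic function factorization for coherent work processes: if an energy-conserving
unitary `V` maps `|ψ⟩⊗|0⟩` to `|φ⟩⊗|ω⟩` with `|0⟩` a zero-energy eigenstate of `H_A`, then
`⟨ψ|e^{itH_S}|ψ⟩ = ⟨φ|e^{itH_S}|φ⟩·⟨ω|e^{itH_A}|ω⟩` for all `t`; hence the energy distribution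
of `ω` is uniquely determined: any other `ω'` arising from such a process with the same `ψ, φ`
has the same characteristic function. -/
theorem stmt19 {m a : ℕ} (HS : Matrix (Fin m) (Fin m) ℂ) (HA : Matrix (Fin a) (Fin a) ℂ)
    (hHS : HS.IsHermitian) (hHA : HA.IsHermitian)
    (Htot V : Matrix (Fin m × Fin a) (Fin m × Fin a) ℂ)
    (hHtot : Htot = Matrix.of fun x y =>
      HS x.1 y.1 * (if x.2 = y.2 then 1 else 0) + (if x.1 = y.1 then 1 else 0) * HA x.2 y.2)
    (hV₁ : V * Vᴴ = 1) (hV₂ : Vᴴ * V = 1)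
    (hcomm : V * Htot = Htot * V)
    (ψ φ : Fin m → ℂ) (e0 ω : Fin a → ℂ)
    (hψ : ∑ i, ‖ψ i‖ ^ 2 = 1) (hφ : ∑ i, ‖φ i‖ ^ 2 = 1)
    (he0n : ∑ j, ‖e0 j‖ ^ 2 = 1) (hωn : ∑ j, ‖ω j‖ ^ 2 = 1)
    (he0 : HA.mulVec e0 = 0)
    (hact : V.mulVec (fun x => ψ x.1 * e0 x.2) = fun x => φ x.1 * ω x.2) :
    (∀ t : ℝ, charFn HS ψ t = charFn HS φ t * charFn HA ω t) ∧
    (∀ (V' : Matrix (Fin m × Fin a) (Fin m × Fin a) ℂ) (ω' : Fin a → ℂ),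
      V' * V'ᴴ = 1 → V'ᴴ * V' = 1 → V' * Htot = Htot * V' →
      (∑ j, ‖ω' j‖ ^ 2 = 1) →
      V'.mulVec (fun x => ψ x.1 * e0 x.2) = (fun x => φ x.1 * ω' x.2) →
      ∀ t : ℝ, charFn HA ω' t = charFn HA ω t) :=
  stmt19_general HS HA Htot V hHtot hV₂ hcomm ψ φ e0 ω hφ he0n he0 hact
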